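/- arXiv:math/0204252 — 2 statements merged into one kernel-verified Lean document; each statement's English description precedes it below -/
import Mathlib

section
/- If for some fixed ℓ every edge (t-1)-coloring of the complete 3-uniform hypergraph on a sufficiently large vertex set admits a monochromatic set of size ℓ, and G is a graph whose geometric thickness is at most t-1, then any induced subgraph construction pattern repeated on a monochromatic subset yields a geometric-thickness-(3)-drawable subgraph; consequently, if G_3(ℓ) has geometric thickness greater than 3 for some ℓ, then the geometric thickness of G_3(n) is unbounded as n → ∞. -/
/-- The graph `G₃(n)` on the 1-element and 3-element subsets of `Fin n`,
with an edge between two subsets exactly when one strictly contains the other. -/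
def G3 (n : ℕ) : SimpleGraph {S : Finset (Fin n) // S.card = 1 ∨ S.card = 3} :=
  SimpleGraph.fromRel (fun S T => S.val ⊂ T.val)

/-- `G` has geometric thickness at most `k`: there is an injective straight-line drawing
of `G` in the plane and a coloring of its edges with `k` colors so that two distinct
edges of the same color meet only at images of shared endpoints. -/
def GeomThickLE {V : Type} (G : SimpleGraph V) (k : ℕ) : Prop :=
  ∃ (f : V → ℝ × ℝ) (c : Sym2 V → Fin k), Function.Injective f ∧
    ∀ a b d e : V, G.Adj a b → G.Adj d e → c s(a, b) = c s(d, e) → s(a, b) ≠ s(d, e) →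
      ∀ x ∈ segment ℝ (f a) (f b) ∩ segment ℝ (f d) (f e),
        ∃ v, (v = a ∨ v = b) ∧ (v = d ∨ v = e) ∧ x = f v

/-!
Colour each tripleton `u` of a `t`-layer drawing of `G₃(n)` by the triple of layers of its three
edges, listed by increasing singleton: `t ^ 3` colours. Ramsey's theorem for `3`-sets gives, for
`n` large, an `ℓ`-set `T` whose tripletons all receive the same triple `(i₀, i₁, i₂)`. The drawing
restricted to the copy of `G₃(ℓ)` spanned by `T` then uses only the layers `i₀, i₁, i₂`.
-/

open Finset

section Ramsey

variable {β κ : Type*}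

def IsHomogeneous (c : Finset β → κ) (r : ℕ) (T : Finset β) : Prop :=
  ∃ i, ∀ u ⊆ T, #u = r → c u = i

theorem IsHomogeneous.mono {c : Finset β → κ} {r : ℕ} {S T : Finset β}
    (hT : IsHomogeneous c r T) (hST : S ⊆ T) : IsHomogeneous c r S :=
  let ⟨i, hi⟩ := hT
  ⟨i, fun u hu => hi u (hu.trans hST)⟩

variable [LinearOrder β]

/-- The colour of an `(r + 1)`-subset of `T` depends only on its least element. -/
def IsMinHomogeneous (c : Finset β → κ) (r : ℕ) (T : Finset β) : Prop :=
  ∀ x ∈ T, IsHomogeneous (fun u => c (insert x u)) r {y ∈ T | x < y}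

theorem IsMinHomogeneous.insert {c : Finset β → κ} {r : ℕ} {T : Finset β} {x : β}
    (hT : IsMinHomogeneous c r T) (hxT : ∀ y ∈ T, x < y)
    (hx : IsHomogeneous (fun u => c (insert x u)) r T) :
    IsMinHomogeneous c r (insert x T) := by
  intro y hy
  rcases mem_insert.1 hy with rfl | hy
  · simpa [filter_insert, filter_true_of_mem hxT] using hx
  · simpa [filter_insert, (hxT y hy).not_gt] using hT y hy

theorem IsMinHomogeneous.exists_isHomogeneous_succ [Fintype κ] {c : Finset β → κ} {r m : ℕ}
    {T : Finset β} (hT : IsMinHomogeneous c r T) (hcard : Fintype.card κ * m ≤ #T) :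
    ∃ S ⊆ T, #S = m ∧ IsHomogeneous c (r + 1) S := by
  classical
  have : Nonempty κ := ⟨c ∅⟩
  choose! d hd using hT
  obtain ⟨i, -, hi⟩ := exists_le_card_fiber_of_mul_le_card_of_maps_to
    (fun x _ => mem_univ (d x)) univ_nonempty (by rwa [card_univ])
  obtain ⟨S, hSi, hS⟩ := exists_subset_card_eq hi
  have hST : S ⊆ T := hSi.trans (filter_subset _ _)
  refine ⟨S, hST, hS, i, fun u huS hur => ?_⟩
  have hu : u.Nonempty := card_pos.1 (by omega)
  have hxS := mem_filter.1 (hSi (huS (u.min'_mem hu)))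
  have hrest : u.erase (u.min' hu) ⊆ {y ∈ T | u.min' hu < y} := fun y hy =>
    mem_filter.2 ⟨hST (huS (mem_of_mem_erase hy)),
      lt_of_le_of_ne (u.min'_le y (mem_of_mem_erase hy)) (ne_of_mem_erase hy).symm⟩
  rw [← insert_erase (u.min'_mem hu), ← hxS.2]
  exact hd _ hxS.1 _ hrest (by rw [card_erase_of_mem (u.min'_mem hu), hur]; rfl)

/-- A bound for the `k`-colour Ramsey number of `m` for `r`-sets:
`(fun N => ramseyBound k r N + 1)^[L] 0` points suffice for a min-homogeneous `L`-set, and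
pigeonholing the colours attached to its minima gives a homogeneous set of `(r + 1)`-sets. -/
def ramseyBound (k : ℕ) : ℕ → ℕ → ℕ
  | 0, m => m
  | r + 1, m => (fun N => ramseyBound k r N + 1)^[k * m] 0

theorem exists_isMinHomogeneous [Fintype κ] {r : ℕ}
    (hr : ∀ (c : Finset β → κ) (s : Finset β) (m : ℕ),
      ramseyBound (Fintype.card κ) r m ≤ #s → ∃ T ⊆ s, #T = m ∧ IsHomogeneous c r T)
    (c : Finset β → κ) (L : ℕ) (s : Finset β)
    (hs : (fun N => ramseyBound (Fintype.card κ) r N + 1)^[L] 0 ≤ #s) :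
    ∃ T ⊆ s, #T = L ∧ IsMinHomogeneous c r T := by
  induction L generalizing s with
  | zero => exact ⟨∅, empty_subset s, rfl, fun x hx => absurd hx (notMem_empty x)⟩
  | succ L ih =>
    rw [Function.iterate_succ_apply'] at hs
    have hne : s.Nonempty := card_pos.1 (by omega)
    set x := s.min' hne
    obtain ⟨t, hts, ht, hxt⟩ := hr (fun u => c (insert x u)) (s.erase x)
      ((fun N => ramseyBound (Fintype.card κ) r N + 1)^[L] 0)
      (by rw [card_erase_of_mem (s.min'_mem hne)]; omega)
    obtain ⟨T, hTt, hT, hmin⟩ := ih t ht.ge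
    have hxT : ∀ y ∈ T, x < y := fun y hy =>
      have hy := hts (hTt hy)
      lt_of_le_of_ne (s.min'_le y (mem_of_mem_erase hy)) (ne_of_mem_erase hy).symm
    refine ⟨insert x T, insert_subset (s.min'_mem hne) ((hTt.trans hts).trans (erase_subset _ _)),
      ?_, hmin.insert hxT (hxt.mono hTt)⟩
    rw [card_insert_of_notMem fun h => (hxT x h).false, hT]

theorem exists_isHomogeneous_of_ramseyBound_le [Fintype κ] (r : ℕ) (c : Finset β → κ)
    (s : Finset β) (m : ℕ) (hs : ramseyBound (Fintype.card κ) r m ≤ #s) :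
    ∃ T ⊆ s, #T = m ∧ IsHomogeneous c r T := by
  induction r generalizing c s m with
  | zero =>
    obtain ⟨T, hTs, hT⟩ := exists_subset_card_eq hs
    exact ⟨T, hTs, hT, c ∅, fun u _ hu => by rw [card_eq_zero.1 hu]⟩
  | succ r ih =>
    obtain ⟨T, hTs, hT, hmin⟩ := exists_isMinHomogeneous ih c _ s hs
    obtain ⟨S, hST, hS, hhom⟩ := hmin.exists_isHomogeneous_succ hT.ge
    exact ⟨S, hST.trans hTs, hS, hhom⟩

end Ramsey

section Drawing

variable {V W : Type} {k t : ℕ}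

def IsLayeredDrawing (G : SimpleGraph V) (f : V → ℝ × ℝ) (c : Sym2 V → Fin k) : Prop :=
  Function.Injective f ∧ ∀ a b d e : V, G.Adj a b → G.Adj d e → c s(a, b) = c s(d, e) →
    s(a, b) ≠ s(d, e) → ∀ x ∈ segment ℝ (f a) (f b) ∩ segment ℝ (f d) (f e),
      ∃ v, (v = a ∨ v = b) ∧ (v = d ∨ v = e) ∧ x = f v

theorem geomThickLE_iff {G : SimpleGraph V} :
    GeomThickLE G k ↔ ∃ f, ∃ c : Sym2 V → Fin k, IsLayeredDrawing G f c := Iff.rfl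

theorem GeomThickLE.mono {G : SimpleGraph V} (hG : GeomThickLE G k) {m : ℕ} (hkm : k ≤ m) :
    GeomThickLE G m :=
  let ⟨f, c, hf, hc⟩ := hG
  ⟨f, Fin.castLE hkm ∘ c, hf, fun a b d e hab hde hcc =>
    hc a b d e hab hde (Fin.castLE_injective hkm hcc)⟩

theorem IsLayeredDrawing.comap {G : SimpleGraph V} {H : SimpleGraph W} {f : W → ℝ × ℝ}
    {c : Sym2 W → Fin t} (hD : IsLayeredDrawing H f c) (φ : G ↪g H) (c' : Sym2 V → Fin k)
    (g : Fin k → Fin t) (hg : ∀ a b, G.Adj a b → c s(φ a, φ b) = g (c' s(a, b))) :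
    IsLayeredDrawing G (f ∘ φ) c' := by
  refine ⟨hD.1.comp φ.injective, fun a b d e hab hde hcc hne x hx => ?_⟩
  have hne' : s(φ a, φ b) ≠ s(φ d, φ e) := fun h =>
    hne (Sym2.map.injective φ.injective h)
  obtain ⟨v, hv₁, hv₂, rfl⟩ := hD.2 _ _ _ _ (φ.map_adj_iff.2 hab) (φ.map_adj_iff.2 hde)
    (by rw [hg a b hab, hg d e hde, hcc]) hne' x hx
  obtain ⟨w, hw, rfl⟩ : ∃ w, (w = a ∨ w = b) ∧ φ w = v := by
    rcases hv₁ with rfl | rfl <;> exact ⟨_, by simp, rfl⟩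
  exact ⟨w, hw, by simpa only [φ.injective.eq_iff] using hv₂, rfl⟩

end Drawing

namespace G3

variable {ℓ n t : ℕ}

abbrev Vertex (n : ℕ) : Type := {S : Finset (Fin n) // #S = 1 ∨ #S = 3}

def map (e : Fin ℓ ↪ Fin n) : G3 ℓ ↪g G3 n where
  toFun A := ⟨A.1.map e, by simpa only [card_map] using A.2⟩
  inj' A B h := Subtype.ext (map_injective e (congrArg Subtype.val h))
  map_rel_iff' {A B} := by
    change (G3 n).Adj ⟨A.1.map e, _⟩ ⟨B.1.map e, _⟩ ↔ _
    simp only [G3, SimpleGraph.fromRel_adj, ne_eq, Subtype.ext_iff, map_inj, map_ssubset_map]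

theorem exists_eq_singleton_of_ssubset {A B : Vertex n}
    (h : A.1 ⊂ B.1) : ∃ x ∈ B.1, A.1 = {x} ∧ #B.1 = 3 := by
  have hlt := card_lt_card h
  obtain ⟨hA, hB⟩ : #A.1 = 1 ∧ #B.1 = 3 := by
    rcases A.2 with hA | hA <;> rcases B.2 with hB | hB <;> omega
  obtain ⟨x, hx⟩ := card_eq_one.1 hA
  exact ⟨x, h.subset (hx ▸ mem_singleton_self x), hx, hB⟩

noncomputable def layerTriple [NeZero t] (c : Sym2 (Vertex n) → Fin t)
    (u : Finset (Fin n)) : Fin 3 → Fin t :=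
  if h : #u = 3 then
    fun p => c s(⟨{u.orderEmbOfFin h p}, Or.inl (card_singleton _)⟩, ⟨u, Or.inr h⟩)
  else 0

theorem mem_range_layerTriple [NeZero t] (c : Sym2 (Vertex n) → Fin t)
    {A B : Vertex n} (h : A.1 ⊂ B.1) :
    c s(A, B) ∈ Set.range (layerTriple c B.1) := by
  obtain ⟨x, hxB, hA, hB⟩ := exists_eq_singleton_of_ssubset h
  obtain ⟨p, hp⟩ : x ∈ Set.range (B.1.orderEmbOfFin hB) := by
    rwa [range_orderEmbOfFin]
  refine ⟨p, ?_⟩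
  simp only [layerTriple, dif_pos hB, hp]
  obtain ⟨A, hA₀⟩ := A
  subst hA
  rfl

end G3

theorem geomThickLE_three_of_geomThickLE_ramseyBound {t : ℕ} [NeZero t] (ℓ : ℕ)
    (h : GeomThickLE (G3 (ramseyBound (t ^ 3) 3 ℓ)) t) : GeomThickLE (G3 ℓ) 3 := by
  obtain ⟨f, c, hD⟩ := geomThickLE_iff.1 h
  obtain ⟨T, -, hT, i, hi⟩ :=
    exists_isHomogeneous_of_ramseyBound_le 3 (G3.layerTriple c) univ ℓ (by simp)
  let φ := G3.map (T.orderEmbOfFin hT).toEmbedding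
  have hφT : ∀ A, (φ A).1 ⊆ T := by
    intro A x hx
    obtain ⟨a, -, rfl⟩ := mem_map.1 hx
    exact T.orderEmbOfFin_mem hT a
  have hrange : ∀ A B, (G3 ℓ).Adj A B → c s(φ A, φ B) ∈ Set.range i := by
    suffices key : ∀ A B, A.1 ⊂ B.1 → c s(φ A, φ B) ∈ Set.range i by
      intro A B hAB
      rcases (SimpleGraph.fromRel_adj _ _ _).1 hAB with ⟨-, hAB | hBA⟩
      · exact key A B hAB
      · exact Sym2.eq_swap ▸ key B A hBA
    intro A B hAB
    have hφAB : (φ A).1 ⊂ (φ B).1 := map_ssubset_map.2 hAB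
    obtain ⟨-, -, -, hB⟩ := G3.exists_eq_singleton_of_ssubset hφAB
    rw [← hi _ (hφT B) hB]
    exact G3.mem_range_layerTriple c hφAB
  exact geomThickLE_iff.2 ⟨f ∘ φ, fun z => Function.invFun i (c (z.map φ)),
    hD.comap φ _ i fun a b hab => (Function.invFun_eq (hrange a b hab)).symm⟩

/-- If some `G₃(ℓ)` has geometric thickness greater than 3, then (via Ramsey's theorem
for 3-uniform hypergraphs applied to the layer triples of the tripletons) the geometric
thickness of `G₃(n)` is unbounded as `n → ∞`. -/
theorem G3_geomThickness_unbounded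
    (h : ∃ ℓ : ℕ, ¬ GeomThickLE (G3 ℓ) 3) :
    ∀ t : ℕ, ∃ n : ℕ, ¬ GeomThickLE (G3 n) t := by
  obtain ⟨ℓ, hℓ⟩ := h
  intro t
  exact ⟨ramseyBound ((t + 1) ^ 3) 3 ℓ, fun ht =>
    hℓ (geomThickLE_three_of_geomThickLE_ramseyBound ℓ (ht.mono t.le_succ))⟩
end

section
/- Erdős–Szekeres theorem: for every integer k ≥ 3 there exists N such that any set of at least N points in the plane in general position (no three collinear) contains k points that are the vertices of a convex polygon (i.e., k points in convex position). -/
/-!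
Order the points lexicographically and colour each triple by the orientation of its increasing
enumeration. Ramsey's theorem for triples gives `k` points whose increasing triples all have the
same orientation, which general position keeps away from zero. Such points are in convex
position: if `m` is one of them and `a` its successor in the cyclic order, every other point lies
strictly on one side of the line through `m` and `a`, so `m` is not a convex combination of the
others.
-/

open Finset Function

section Ramsey

variable {α κ : Type*}

def IsMonochromatic (r : ℕ) (c : Finset α → κ) (b : κ) (T : Finset α) : Prop :=
  ∀ U ⊆ T, #U = r → c U = b

theorem IsMonochromatic.mono {r : ℕ} {c : Finset α → κ} {b : κ} {T T' : Finset α}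
    (h : IsMonochromatic r c b T) (hT : T' ⊆ T) : IsMonochromatic r c b T' :=
  fun U hU => h U (hU.trans hT)

theorem IsMonochromatic.insert [DecidableEq α] {r : ℕ} {c : Finset α → κ} {b : κ}
    {T : Finset α} {v : α} (hv : IsMonochromatic r (fun U => c (insert v U)) b T)
    (h : IsMonochromatic (r + 1) c b T) : IsMonochromatic (r + 1) c b (insert v T) := by
  intro U hU hUr
  by_cases hvU : v ∈ U
  · rw [← insert_erase hvU]
    exact hv _ ((erase_subset_erase v hU).trans (erase_insert_subset v T))
      (by rw [card_erase_of_mem hvU, hUr]; rfl)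
  · exact h U ((subset_insert_iff_of_notMem hvU).mp hU) hUr

variable (α) in
def RamseyBound (r : ℕ) (n : κ → ℕ) (N : ℕ) : Prop :=
  ∀ (c : Finset α → κ) (S : Finset α), N ≤ #S →
    ∃ b, ∃ T ⊆ S, #T = n b ∧ IsMonochromatic r c b T

theorem ramseyBound_zero [Fintype κ] (n : κ → ℕ) : RamseyBound α 0 n (∑ b, n b) := by
  intro c S hS
  obtain ⟨T, hTS, hT⟩ :=
    exists_subset_card_eq ((single_le_sum (by simp) (mem_univ (c ∅))).trans hS)
  exact ⟨c ∅, T, hTS, hT, fun U _ hU => by rw [card_eq_zero.mp hU]⟩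

theorem ramseyBound_of_eq_zero {r : ℕ} {n : κ → ℕ} {b : κ} (hb : n b = 0) :
    RamseyBound α (r + 1) n 0 :=
  fun _ _ _ => ⟨b, ∅, empty_subset _, hb.symm,
    fun U hU hUr => by simp [subset_empty.mp hU] at hUr⟩

theorem ramseyBound_succ [DecidableEq κ] {r : ℕ} {n N : κ → ℕ} {M : ℕ} (hn : ∀ b, n b ≠ 0)
    (hN : ∀ b, RamseyBound α (r + 1) (update n b (n b - 1)) (N b)) (hM : RamseyBound α r N M) :
    RamseyBound α (r + 1) n (M + 1) := by
  classical
  intro c S hS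
  obtain ⟨v, hvS⟩ := card_pos.mp (by omega : 0 < #S)
  obtain ⟨b, A, hAS, hA, hAc⟩ := hM (fun U => c (insert v U)) (S.erase v)
    (by rw [card_erase_of_mem hvS]; omega)
  obtain ⟨b', T, hTA, hT, hTc⟩ := hN b c A hA.ge
  have hTS : T ⊆ S := hTA.trans (hAS.trans (erase_subset v S))
  by_cases hb : b' = b
  · subst hb
    have hvT : v ∉ T := fun hv => (mem_erase.mp (hAS (hTA hv))).1 rfl
    refine ⟨b', insert v T, insert_subset hvS hTS, ?_, (hAc.mono hTA).insert hTc⟩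
    rw [card_insert_of_notMem hvT, hT, update_self]
    have := hn b'
    omega
  · exact ⟨b', T, hTS, by rw [hT, update_of_ne hb], hTc⟩

theorem exists_ramseyBound [Fintype κ] (r : ℕ) (n : κ → ℕ) : ∃ N, RamseyBound α r n N := by
  classical
  induction r generalizing n with
  | zero => exact ⟨_, ramseyBound_zero n⟩
  | succ r ih =>
    induction hs : ∑ b, n b using Nat.strong_induction_on generalizing n with
    | _ s ihs =>
      by_cases hn : ∃ b, n b = 0
      · obtain ⟨b, hb⟩ := hn
        exact ⟨0, ramseyBound_of_eq_zero hb⟩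
      push Not at hn
      have hlt : ∀ b, ∑ b', update n b (n b - 1) b' < s := fun b => hs ▸
        sum_lt_sum (fun b' _ => by rcases eq_or_ne b' b with rfl | h <;> simp [*])
          ⟨b, mem_univ b, by rw [update_self]; have := hn b; omega⟩
      choose N hN using fun b => ihs _ (hlt b) _ rfl
      obtain ⟨M, hM⟩ := ih N
      exact ⟨M + 1, ramseyBound_succ hn hN hM⟩

end Ramsey

theorem forall_mem_triple_lt_lt_iff {α : Type*} [LinearOrder α] {R : α → α → α → Prop}
    {i j l : α} (hij : i < j) (hjl : j < l) :
    (∀ a ∈ ({i, j, l} : Finset α), ∀ b ∈ ({i, j, l} : Finset α), ∀ c ∈ ({i, j, l} : Finset α),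
      a < b → b < c → R a b c) ↔ R i j l := by
  refine ⟨fun h => h i (by simp) j (by simp) l (by simp) hij hjl,
    fun h a ha b hb c hc hab hbc => ?_⟩
  simp only [mem_insert, mem_singleton] at ha hb hc
  rcases ha with rfl | rfl | rfl <;> rcases hb with rfl | rfl | rfl <;>
    rcases hc with rfl | rfl | rfl <;> first | exact h | order

theorem exists_subset_forall_lt_lt_or_forall_not {α : Type*} [LinearOrder α] (k : ℕ) :
    ∃ N, ∀ (R : α → α → α → Prop) (S : Finset α), N ≤ #S → ∃ T ⊆ S, #T = k ∧
      ((∀ i ∈ T, ∀ j ∈ T, ∀ l ∈ T, i < j → j < l → R i j l) ∨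
        (∀ i ∈ T, ∀ j ∈ T, ∀ l ∈ T, i < j → j < l → ¬R i j l)) := by
  classical
  obtain ⟨N, hN⟩ := exists_ramseyBound (α := α) 3 fun _ : Bool => k
  refine ⟨N, fun R S hS => ?_⟩
  obtain ⟨b, T, hTS, hTk, hT⟩ := hN
    (fun U => decide (∀ i ∈ U, ∀ j ∈ U, ∀ l ∈ U, i < j → j < l → R i j l)) S hS
  have hTb : ∀ i ∈ T, ∀ j ∈ T, ∀ l ∈ T, i < j → j < l → decide (R i j l) = b := by
    intro i hi j hj l hl hij hjl
    have := hT {i, j, l} (by simp [insert_subset_iff, *])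
      (card_eq_three.mpr ⟨i, j, l, hij.ne, (hij.trans hjl).ne, hjl.ne, rfl⟩)
    simpa only [forall_mem_triple_lt_lt_iff hij hjl] using this
  refine ⟨T, hTS, hTk, ?_⟩
  cases b
  · exact Or.inr fun i hi j hj l hl hij hjl => by simpa using hTb i hi j hj l hl hij hjl
  · exact Or.inl fun i hi j hj l hl hij hjl => by simpa using hTb i hi j hj l hl hij hjl

/-- Twice the signed area of the triangle `abc`: positive iff `a, b, c` turn counterclockwise. -/
def orient (a b c : ℝ × ℝ) : ℝ :=
  (b.1 - a.1) * (c.2 - a.2) - (c.1 - a.1) * (b.2 - a.2)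

theorem orient_rotate (a b c : ℝ × ℝ) : orient b c a = orient a b c := by
  unfold orient; ring

theorem orient_swap (a b c : ℝ × ℝ) : orient c b a = -orient a b c := by
  unfold orient; ring

theorem collinear_of_orient_eq_zero {a b c : ℝ × ℝ} (h : orient a b c = 0) :
    Collinear ℝ ({a, b, c} : Set (ℝ × ℝ)) := by
  rcases eq_or_ne b a with rfl | hba
  · simpa using collinear_pair ℝ b c
  rw [collinear_iff_of_mem (Set.mem_insert a _)]
  refine ⟨b - a, ?_⟩
  have hx : (b.1 - a.1) ^ 2 + (b.2 - a.2) ^ 2 ≠ 0 := by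
    intro h0
    exact hba (Prod.ext (by nlinarith) (by nlinarith))
  rintro p (rfl | rfl | rfl)
  · exact ⟨0, by simp⟩
  · exact ⟨1, by simp⟩
  · refine ⟨((b.1 - a.1) * (p.1 - a.1) + (b.2 - a.2) * (p.2 - a.2)) /
      ((b.1 - a.1) ^ 2 + (b.2 - a.2) ^ 2), Prod.ext ?_ ?_⟩ <;>
      simp only [vadd_eq_add, Prod.fst_add, Prod.snd_add, Prod.smul_fst, Prod.smul_snd,
        Prod.fst_sub, Prod.snd_sub, smul_eq_mul] <;> field_simp <;> unfold orient at h
    · linear_combination (a.2 - b.2) * h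
    · linear_combination (b.1 - a.1) * h

theorem notMem_convexHull_insert_of_lt {𝕜 E : Type*} [Field 𝕜] [LinearOrder 𝕜]
    [IsStrictOrderedRing 𝕜] [AddCommGroup E] [Module 𝕜 E] (f : E →ₗ[𝕜] 𝕜) {a q : E} {S : Set E}
    (hqa : q ≠ a) (hq : f q ≤ f a) (hS : ∀ y ∈ S, f a < f y) : q ∉ convexHull 𝕜 (insert a S) := by
  intro hmem
  rcases S.eq_empty_or_nonempty with rfl | hne
  · simp only [insert_empty_eq, convexHull_singleton, Set.mem_singleton_iff] at hmem
    exact hqa hmem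
  rw [convexHull_insert hne, convexJoin_singleton_left] at hmem
  obtain ⟨y, hy, t, u, ht, hu, htu, rfl⟩ := Set.mem_iUnion₂.mp hmem
  have hfy : f a < f y := convexHull_min hS (convex_halfSpace_gt f.isLinear _) hy
  obtain rfl : t = 1 - u := by linarith
  rw [map_add, map_smul, map_smul, smul_eq_mul, smul_eq_mul] at hq
  obtain rfl : u = 0 := by nlinarith
  exact hqa (by rw [sub_zero, one_smul, zero_smul, add_zero])

theorem notMem_convexHull_insert_of_orient_pos {q a : ℝ × ℝ} {S : Set (ℝ × ℝ)} (hqa : q ≠ a)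
    (hS : ∀ y ∈ S, 0 < orient q a y) : q ∉ convexHull ℝ (insert a S) := by
  let f : ℝ × ℝ →ₗ[ℝ] ℝ := (a.1 - q.1) • LinearMap.snd ℝ ℝ ℝ - (a.2 - q.2) • LinearMap.fst ℝ ℝ ℝ
  have hf : ∀ y, f y - f q = orient q a y := fun y => by simp [f, orient]; ring
  have hfa : f a = f q := by linarith [hf a, show orient q a a = 0 by unfold orient; ring]
  exact notMem_convexHull_insert_of_lt f hqa hfa.ge fun y hy => by linarith [hf y, hS y hy]

section

variable {α : Type*} [LinearOrder α] {p : α → ℝ × ℝ} {T : Finset α}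

/-- `a` is the successor of `m` in the cyclic order of `T`. -/
theorem exists_orient_pos_of_orient_pos
    (hT : ∀ i ∈ T, ∀ j ∈ T, ∀ k ∈ T, i < j → j < k → 0 < orient (p i) (p j) (p k))
    {m : α} (hm : m ∈ T) (hne : (T.erase m).Nonempty) :
    ∃ a ∈ T.erase m, ∀ b ∈ T.erase m, b ≠ a → 0 < orient (p m) (p a) (p b) := by
  by_cases hR : (T.filter (m < ·)).Nonempty
  · set a := (T.filter (m < ·)).min' hR
    obtain ⟨haT, hma⟩ := mem_filter.mp ((T.filter (m < ·)).min'_mem hR)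
    refine ⟨a, mem_erase.mpr ⟨hma.ne', haT⟩, fun b hb hba => ?_⟩
    obtain ⟨hbm, hbT⟩ := mem_erase.mp hb
    rcases hbm.lt_or_gt with hbm | hmb
    · rw [orient_rotate]
      exact hT b hbT m hm a haT hbm hma
    · have hab : a < b := lt_of_le_of_ne (min'_le _ b (mem_filter.mpr ⟨hbT, hmb⟩)) hba.symm
      exact hT m hm a haT b hbT hma hab
  · have hlt : ∀ b ∈ T.erase m, b < m := fun b hb =>
      (ne_of_mem_erase hb).lt_of_le <| not_lt.mp fun hmb =>
        hR ⟨b, mem_filter.mpr ⟨mem_of_mem_erase hb, hmb⟩⟩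
    set a := (T.erase m).min' hne
    have ha := (T.erase m).min'_mem hne
    refine ⟨a, ha, fun b hb hba => ?_⟩
    have hab : a < b := lt_of_le_of_ne (min'_le _ b hb) hba.symm
    rw [orient_rotate, orient_rotate]
    exact hT a (mem_of_mem_erase ha) b (mem_of_mem_erase hb) m hm hab (hlt b hb)

theorem notMem_convexHull_erase_of_orient_pos (hp : Injective p)
    (hT : ∀ i ∈ T, ∀ j ∈ T, ∀ k ∈ T, i < j → j < k → 0 < orient (p i) (p j) (p k)) :
    ∀ q ∈ T.image p, q ∉ convexHull ℝ (↑((T.image p).erase q) : Set (ℝ × ℝ)) := by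
  intro q hq
  obtain ⟨m, hm, rfl⟩ := mem_image.mp hq
  rw [← image_erase hp]
  rcases (T.erase m).eq_empty_or_nonempty with he | hne
  · simp [he]
  obtain ⟨a, ha, hpivot⟩ := exists_orient_pos_of_orient_pos hT hm hne
  rw [← insert_erase ha, image_insert, coe_insert]
  refine notMem_convexHull_insert_of_orient_pos (hp.ne (ne_of_mem_erase ha).symm) ?_
  simp only [coe_image, Set.forall_mem_image, mem_coe]
  exact fun b hb => hpivot b (mem_of_mem_erase hb) (ne_of_mem_erase hb)

/-- Reversing the order of the indices reverses every orientation. -/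
theorem notMem_convexHull_erase_of_orient_neg (hp : Injective p)
    (hT : ∀ i ∈ T, ∀ j ∈ T, ∀ k ∈ T, i < j → j < k → orient (p i) (p j) (p k) < 0) :
    ∀ q ∈ T.image p, q ∉ convexHull ℝ (↑((T.image p).erase q) : Set (ℝ × ℝ)) :=
  notMem_convexHull_erase_of_orient_pos (α := αᵒᵈ) hp fun i hi j hj k hk hij hjk => by
    linarith [orient_swap (p k) (p j) (p i), hT k hk j hj i hi hjk hij]

end

theorem erdos_szekeres_convex_position_general (k : ℕ) :
    ∃ N : ℕ, ∀ P : Finset (ℝ × ℝ), N ≤ P.card →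
      (∀ a b c : ℝ × ℝ, a ∈ P → b ∈ P → c ∈ P → a ≠ b → a ≠ c → b ≠ c →
        ¬ Collinear ℝ ({a, b, c} : Set (ℝ × ℝ))) →
      ∃ Q ⊆ P, Q.card = k ∧
        ∀ p ∈ Q, p ∉ convexHull ℝ (↑(Q.erase p) : Set (ℝ × ℝ)) := by
  obtain ⟨N, hN⟩ := exists_subset_forall_lt_lt_or_forall_not (α := Lex (ℝ × ℝ)) k
  refine ⟨N, fun P hP hgen => ?_⟩
  obtain ⟨T, hTP, hTk, hT⟩ := hN (fun x y z => 0 < orient (ofLex x) (ofLex y) (ofLex z))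
    (P.map toLex.toEmbedding) (by simpa using hP)
  have hmem : ∀ x ∈ T, ofLex x ∈ P := fun x hx => by simpa using hTP hx
  refine ⟨T.image ofLex, fun x hx => ?_, by rwa [card_image_of_injective _ ofLex.injective], ?_⟩
  · obtain ⟨y, hy, rfl⟩ := mem_image.mp hx
    exact hmem y hy
  rcases hT with hpos | hneg
  · exact notMem_convexHull_erase_of_orient_pos ofLex.injective hpos
  refine notMem_convexHull_erase_of_orient_neg ofLex.injective fun i hi j hj l hl hij hjl => ?_
  refine (not_lt.mp (hneg i hi j hj l hl hij hjl)).lt_of_ne fun h0 => ?_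
  have hne : ∀ {x y : Lex (ℝ × ℝ)}, x < y → ofLex x ≠ ofLex y := fun h => ofLex.injective.ne h.ne
  exact hgen _ _ _ (hmem i hi) (hmem j hj) (hmem l hl) (hne hij) (hne (hij.trans hjl)) (hne hjl)
    (collinear_of_orient_eq_zero h0)

/-- Erdős–Szekeres theorem: for every `k ≥ 3` there exists `N` such that any set of at
least `N` points in the plane with no three collinear contains `k` points in convex
position (each of them a vertex of their convex hull). -/
theorem erdos_szekeres_convex_position (k : ℕ) (hk : 3 ≤ k) :
    ∃ N : ℕ, ∀ P : Finset (ℝ × ℝ), N ≤ P.card →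
      (∀ a b c : ℝ × ℝ, a ∈ P → b ∈ P → c ∈ P → a ≠ b → a ≠ c → b ≠ c →
        ¬ Collinear ℝ ({a, b, c} : Set (ℝ × ℝ))) →
      ∃ Q ⊆ P, Q.card = k ∧
        ∀ p ∈ Q, p ∉ convexHull ℝ (↑(Q.erase p) : Set (ℝ × ℝ)) :=
  erdos_szekeres_convex_position_general k
end
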